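/- (Inversion for rebind) If Γ ⊢ t[r] : ⋀_{i∈1..m} τ_i^{ℓ_i} is derivable for a rebind term t[r], then Γ ⊢ t : ⋀_{i∈1..m} τ_i^{ℓ_i + 1} and Γ ⊢ r ok. -/
import Mathlib


set_option linter.unusedVariables false

-- Primitive types and term types of the unbind/rebind calculus.
mutual
inductive PrimTy : Type where
  | int : PrimTy
  | code : PrimTy
  | arrow : Ty → Ty → PrimTy
inductive Ty : Type where
  | prim : PrimTy → ℕ → Ty
  | inter : Ty → Ty → Ty
end

/-- `T.raise k` increases all top-level conjunct levels by `k` (written `T^{+k}`). -/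
def Ty.raise : Ty → ℕ → Ty
  | .prim τ ℓ, k => .prim τ (ℓ + k)
  | .inter T1 T2, k => .inter (T1.raise k) (T2.raise k)

/-- Congruence on types. -/
inductive TyEq : Ty → Ty → Prop where
  | refl : TyEq T T
  | symm : TyEq T1 T2 → TyEq T2 T1
  | trans : TyEq T1 T2 → TyEq T2 T3 → TyEq T1 T3
  | interCongr : TyEq T1 T1' → TyEq T2 T2' → TyEq (.inter T1 T2) (.inter T1' T2')
  | arrowCongr : TyEq T1 T1' → TyEq T2 T2' →
      TyEq (.prim (.arrow T1 T2) ℓ) (.prim (.arrow T1' T2') ℓ)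
  | idem : TyEq T (.inter T T)
  | comm : TyEq (.inter T1 T2) (.inter T2 T1)
  | assoc : TyEq (.inter T1 (.inter T2 T3)) (.inter (.inter T1 T2) T3)
  | distrib : TyEq (.inter (.prim (.arrow T T1) ℓ) (.prim (.arrow T T2) ℓ))
      (.prim (.arrow T (.inter T1 T2)) ℓ)
  | shift : TyEq (.prim (.arrow T' (Ty.raise T ℓ')) (ℓ+1)) (.prim (.arrow T' (Ty.raise T (ℓ'+1))) ℓ)

/-- Subtyping on types. -/
inductive TySub : Ty → Ty → Prop where
  | int : TySub (.prim .int ℓ) (.prim .int (ℓ+1))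
  | interElim : TySub (.inter T1 T2) T1
  | arrow : TySub T2 T1 → TySub T1' T2' →
      TySub (.prim (.arrow T1 T1') ℓ) (.prim (.arrow T2 T2') ℓ)
  | mono : TySub T1 T1' → TySub T2 T2' → TySub (.inter T1 T2) (.inter T1' T2')
  | trans : TySub T1 T2 → TySub T2 T3 → TySub T1 T3
  | ofEq : TyEq T1 T2 → TySub T1 T2

/-- Value types: intersections with at least one conjunct of level 0. -/
inductive IsValueTy : Ty → Prop where
  | prim : IsValueTy (.prim τ 0)
  | inter : IsValueTy V → IsValueTy (.inter V T)

/-- `bigInter T Ts` is the intersection of the nonempty family `T :: Ts`. -/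
def bigInter : Ty → List Ty → Ty
  | T, [] => T
  | T, T' :: Ts => .inter T (bigInter T' Ts)

abbrev TCtx := List (String × Ty)

/-- Terms of the unbind/rebind calculus. -/
inductive Tm : Type where
  | var : String → Tm
  | num : ℤ → Tm
  | add : Tm → Tm → Tm
  | lam : String → Tm → Tm
  | app : Tm → Tm → Tm
  | unbind : TCtx → Tm → Tm
  | rebind : Tm → List (String × Ty × Tm) → Tm
  | error : Tm

abbrev TSubst := List (String × Ty × Tm)
abbrev USubst := List (String × Tm)

inductive IsValue : Tm → Prop where
  | lam : IsValue (.lam x t)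
  | unbind : IsValue (.unbind Γ t)
  | num : IsValue (.num n)

mutual
/-- Free variables of a term. -/
def FV : Tm → Finset String
  | .var x => {x}
  | .num _ => ∅
  | .add t1 t2 => FV t1 ∪ FV t2
  | .lam x t => FV t \ {x}
  | .app t1 t2 => FV t1 ∪ FV t2
  | .unbind Γ' t => FV t \ (Γ'.map Prod.fst).toFinset
  | .rebind t r => FV t ∪ FVr r
  | .error => ∅
/-- Free variables of a typed substitution. -/
def FVr : List (String × Ty × Tm) → Finset String
  | [] => ∅
  | p :: r => FV p.2.2 ∪ FVr r
end

/-- Free variables of an untyped substitution. -/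
def FVu (σ : USubst) : Finset String := σ.foldr (fun p acc => FV p.2 ∪ acc) ∅

mutual
/-- `SubstM t σ t'` : the (capture-avoiding, partial) application of the
substitution `σ` to `t` is defined and equals `t'`. -/
inductive SubstM : Tm → USubst → Tm → Prop where
  | varHit : σ.lookup x = some v → SubstM (.var x) σ v
  | varMiss : σ.lookup x = none → SubstM (.var x) σ (.var x)
  | num : SubstM (.num n) σ (.num n)
  | error : SubstM .error σ .error
  | add : SubstM t1 σ t1' → SubstM t2 σ t2' → SubstM (.add t1 t2) σ (.add t1' t2')
  | app : SubstM t1 σ t1' → SubstM t2 σ t2' → SubstM (.app t1 t2) σ (.app t1' t2')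
  | lam : x ∉ FVu σ → SubstM t (σ.filter (fun p => p.1 != x)) t' →
      SubstM (.lam x t) σ (.lam x t')
  | unbind : (∀ y ∈ Γ'.map Prod.fst, y ∉ FVu σ) →
      SubstM t (σ.filter (fun p => !(Γ'.map Prod.fst).contains p.1)) t' →
      SubstM (.unbind Γ' t) σ (.unbind Γ' t')
  | rebind : SubstM t σ t' → SubstML r σ r' → SubstM (.rebind t r) σ (.rebind t' r')
inductive SubstML : TSubst → USubst → TSubst → Prop where
  | nil : SubstML [] σ []
  | cons : SubstM u σ u' → SubstML r σ r' → SubstML ((x,T,u) :: r) σ ((x,T,u') :: r')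
end

mutual
/-- The intersection type system with levels. -/
inductive Typed : TCtx → Tm → Ty → Prop where
  | var : Γ.lookup x = some T → Typed Γ (.var x) T
  | num : Typed Γ (.num n) (.prim .int 0)
  | sum : Typed Γ t1 (.prim .int ℓ) → Typed Γ t2 (.prim .int ℓ) →
      Typed Γ (.add t1 t2) (.prim .int ℓ)
  | error : Typed Γ .error T
  | abs : Γ.lookup x = none → Typed ((x,T) :: Γ) t T' →
      Typed Γ (.lam x t) (.prim (.arrow T T') 0)
  | app : Typed Γ t1 (.prim (.arrow V T) 0) → IsValueTy V → Typed Γ t2 V →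
      Typed Γ (.app t1 t2) T
  | unbind0 : (∀ x ∈ Γ'.map Prod.fst, Γ.lookup x = none) → Typed (Γ' ++ Γ) t T →
      Typed Γ (.unbind Γ' t) (.prim .code 0)
  | unbind : (∀ x ∈ Γ'.map Prod.fst, Γ.lookup x = none) → Typed (Γ' ++ Γ) t T →
      Typed Γ (.unbind Γ' t) (T.raise 1)
  | rebind : Typed Γ t (T.raise 1) → SubstOk Γ r → Typed Γ (.rebind t r) T
  | inter : Typed Γ t T1 → Typed Γ t T2 → Typed Γ t (.inter T1 T2)
  | sub : Typed Γ t T → TySub T T' → Typed Γ t T'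
/-- `SubstOk Γ r` : the typed substitution `r` is well typed in `Γ`. -/
inductive SubstOk : TCtx → TSubst → Prop where
  | nil : SubstOk Γ []
  | cons : Typed Γ u V → IsValueTy V → TySub V T → SubstOk Γ r →
      SubstOk Γ ((x,T,u) :: r)
end

/-- All terms of a typed substitution are values. -/
def IsValSubst (r : TSubst) : Prop := ∀ p ∈ r, IsValue p.2.2

/-- `Γ' ⊆` the type context extracted from `r`. -/
def CtxSub (Γ' : TCtx) (r : TSubst) : Prop := ∀ x T, (x,T) ∈ Γ' → ∃ u, (x,T,u) ∈ r

/-- The untyped substitution extracted from `r`, restricted to variables in `xs`. -/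
def restrictTo (r : TSubst) (xs : List String) : USubst :=
  (r.filter (fun p => xs.contains p.1)).map (fun p => (p.1, p.2.2))

/-- Evaluation contexts. -/
inductive ECtx : Type where
  | hole : ECtx
  | addL : ECtx → Tm → ECtx
  | addR : ℤ → ECtx → ECtx
  | appL : ECtx → Tm → ECtx
  | appR : Tm → ECtx → ECtx
  | reb : Tm → TSubst → String → Ty → ECtx → ECtx

def plug : ECtx → Tm → Tm
  | .hole, u => u
  | .addL E t, u => .add (plug E u) t
  | .addR n E, u => .add (.num n) (plug E u)
  | .appL E t, u => .app (plug E u) t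
  | .appR v E, u => .app v (plug E u)
  | .reb t r x T E, u => .rebind t (r ++ [(x, T, plug E u)])

/-- Well-formed evaluation contexts (`v E` requires `v` a value). -/
inductive IsECtx : ECtx → Prop where
  | hole : IsECtx .hole
  | addL : IsECtx E → IsECtx (.addL E t)
  | addR : IsECtx E → IsECtx (.addR n E)
  | appL : IsECtx E → IsECtx (.appL E t)
  | appR : IsValue v → IsECtx E → IsECtx (.appR v E)
  | reb : IsECtx E → IsECtx (.reb t r x T E)

/-- Call-by-value reduction. -/
inductive Step : Tm → Tm → Prop where
  | sum : Step (.add (.num n1) (.num n2)) (.num (n1 + n2))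
  | app : IsValue v → SubstM t [(x, v)] t' → Step (.app (.lam x t) v) t'
  | rebindUnbindYes : IsValSubst r → CtxSub Γ' r →
      SubstM t (restrictTo r (Γ'.map Prod.fst)) t' →
      Step (.rebind (.unbind Γ' t) r) t'
  | rebindUnbindNo : IsValSubst r → ¬ CtxSub Γ' r →
      Step (.rebind (.unbind Γ' t) r) .error
  | rebindNum : IsValSubst r → Step (.rebind (.num n) r) (.num n)
  | rebindSum : IsValSubst r →
      Step (.rebind (.add t1 t2) r) (.add (.rebind t1 r) (.rebind t2 r))
  | rebindAbs : IsValSubst r → Step (.rebind (.lam x t) r) (.lam x (.rebind t r))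
  | rebindApp : IsValSubst r →
      Step (.rebind (.app t1 t2) r) (.app (.rebind t1 r) (.rebind t2 r))
  | rebindRebind : IsValSubst rv → Step (.rebind t r) t' →
      Step (.rebind (.rebind t r) rv) (.rebind t' rv)
  | rebindError : IsValSubst r → Step (.rebind .error r) .error
  | ctx : E ≠ .hole → IsECtx E → Step t t' → Step (plug E t) (plug E t')
  | ctxError : E ≠ .hole → IsECtx E → Step t .error → Step (plug E t) .error

/-- Level-0 arrow type from a pair of types. -/
def arr0 (p : Ty × Ty) : Ty := .prim (.arrow p.1 p.2) 0

/-- Primitive type with a level. -/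
def primL (p : PrimTy × ℕ) : Ty := .prim p.1 p.2

theorem tyEq_raise1 {T1 T2 : Ty} (h : TyEq T1 T2) : TyEq (T1.raise 1) (T2.raise 1) := by
  induction h with
  | refl => exact .refl
  | symm _ ih => exact .symm ih
  | trans _ _ ih1 ih2 => exact .trans ih1 ih2
  | interCongr _ _ ih1 ih2 => exact .interCongr ih1 ih2
  | arrowCongr h1 h2 => exact .arrowCongr h1 h2
  | idem => exact .idem
  | comm => exact .comm
  | assoc => exact .assoc
  | distrib => exact .distrib
  | @shift T' T ℓ' ℓ => simpa [Ty.raise] using (TyEq.shift (T' := T') (T := T) (ℓ' := ℓ') (ℓ := ℓ+1))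

theorem tySub_raise1 {T1 T2 : Ty} (h : TySub T1 T2) : TySub (T1.raise 1) (T2.raise 1) := by
  induction h with
  | int => exact .int
  | interElim => exact .interElim
  | arrow h1 h2 => exact .arrow h1 h2
  | mono _ _ ih1 ih2 => exact .mono ih1 ih2
  | trans _ _ ih1 ih2 => exact .trans ih1 ih2
  | ofEq h => exact .ofEq (tyEq_raise1 h)

theorem rebind_inv {Γ : TCtx} {tt : Tm} {T : Ty} (h : Typed Γ tt T) :
    ∀ t r, tt = .rebind t r → Typed Γ t (T.raise 1) ∧ SubstOk Γ r := by
  induction h using Typed.rec (motive_2 := fun Γ r _ => True) with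
  | rebind h1 h2 => intro t r he; cases he; exact ⟨h1, h2⟩
  | inter _ _ ih1 ih2 =>
      intro t r he
      obtain ⟨a1, b1⟩ := ih1 t r he
      obtain ⟨a2, _⟩ := ih2 t r he
      exact ⟨.inter a1 a2, b1⟩
  | sub _ hs ih =>
      intro t r he
      obtain ⟨a, b⟩ := ih t r he
      exact ⟨.sub a (tySub_raise1 hs), b⟩
  | var _ => intro t r he; cases he
  | num => intro t r he; cases he
  | sum _ _ _ _ => intro t r he; cases he
  | error => intro t r he; cases he
  | abs _ _ _ => intro t r he; cases he
  | app _ _ _ _ _ => intro t r he; cases he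
  | unbind0 _ _ _ => intro t r he; cases he
  | unbind _ _ _ => intro t r he; cases he
  | nil => trivial
  | cons _ _ _ _ _ => trivial

theorem bigInter_raise (p : PrimTy × ℕ) (ps : List (PrimTy × ℕ)) :
    (bigInter (primL p) (ps.map primL)).raise 1 =
      bigInter (primL (p.1, p.2 + 1)) (ps.map (fun q => primL (q.1, q.2 + 1))) := by
  induction ps generalizing p with
  | nil => simp [bigInter, primL, Ty.raise]
  | cons q qs ih =>
      simp only [List.map_cons, bigInter, Ty.raise, primL] at ih ⊢
      rw [ih q]

/-- inversion for rebind. -/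
theorem stmt9 (Γ : TCtx) (t : Tm) (r : TSubst)
    (p : PrimTy × ℕ) (ps : List (PrimTy × ℕ))
    (h : Typed Γ (.rebind t r) (bigInter (primL p) (ps.map primL))) :
    Typed Γ t (bigInter (primL (p.1, p.2 + 1))
        (ps.map (fun q => primL (q.1, q.2 + 1)))) ∧
    SubstOk Γ r := by
  obtain ⟨a, b⟩ := rebind_inv h t r rfl
  exact ⟨bigInter_raise p ps ▸ a, b⟩
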